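/- For every irreducible ℂ[S_n]-module V, the restriction of V to the subgroup S_{n−1} ⊆ S_n (permutations fixing n) is multiplicity-free: it decomposes as a direct sum of pairwise non-isomorphic irreducible ℂ[S_{n−1}]-modules, i.e. every irreducible ℂ[S_{n−1}]-module occurs in the restriction with multiplicity at most one. -/

import Mathlib

/-!
Every permutation `σ` of `Fin (n + 1)` is conjugated to `σ⁻¹` by a permutation fixing the last
point: reflect each cycle of `σ` about a base point, taking the last point as base point of its
own cycle. Hence the anti-involution `g ↦ g⁻¹` of `ℂ[S_{n+1}]` fixes every element commuting
with `S_n`, so these elements commute with each other (Gelfand's trick). By Burnside's theorem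
and averaging over `S_n`, every `S_n`-endomorphism of the irreducible `V` is the image of such an
element, so these endomorphisms commute too. Now if `f ≠ 0` and `g` are `S_n`-maps `W → V` and
`p` is an equivariant left inverse of `f` (Maschke), then `f ∘ p` and `g ∘ p` commute, which gives
`g = f ∘ (p ∘ g)`, and `p ∘ g` is a scalar by Schur's lemma.
-/

/-- A representation `ρ` of `G` on `V` is irreducible if `V ≠ 0` and the only
`G`-invariant subspaces of `V` are `0` and `V`. -/
def RepIsIrreducible {k : Type*} [Field k] {G : Type*} [Group G]
    {V : Type*} [AddCommGroup V] [Module k V] (ρ : Representation k G V) : Prop :=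
  (∃ v : V, v ≠ 0) ∧
    ∀ p : Submodule k V, (∀ (g : G) (v : V), v ∈ p → ρ g v ∈ p) → p = ⊥ ∨ p = ⊤

/-- The subgroup `S_n ⊆ S_{n+1}` of permutations fixing the last point. -/
def pointStabilizer (n : ℕ) : Subgroup (Equiv.Perm (Fin (n + 1))) :=
  MulAction.stabilizer (Equiv.Perm (Fin (n + 1))) (Fin.last n)

/-- The space of `H`-equivariant linear maps between a representation `τ` of a subgroup
`H ≤ G` and (the restriction to `H` of) a representation `ρ` of `G`. -/
def equivariantHoms {G : Type*} [Group G] (H : Subgroup G)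
    {V : Type*} [AddCommGroup V] [Module ℂ V] (ρ : Representation ℂ G V)
    {W : Type*} [AddCommGroup W] [Module ℂ W] (τ : Representation ℂ H W) :
    Submodule ℂ (W →ₗ[ℂ] V) where
  carrier := {f | ∀ (σ : H) (w : W), f (τ σ w) = ρ (σ : G) (f w)}
  add_mem' := by intro f g hf hg σ w; simp [hf σ w, hg σ w]
  zero_mem' := by intro σ w; simp
  smul_mem' := by intro c f hf σ w; simp [hf σ w]

open scoped MonoidAlgebra

namespace Equiv.Perm

variable {α : Type*} (σ : Perm α)

theorem zpow_neg_apply_eq_of_zpow_apply_eq {x : α} {i j : ℤ} (h : (σ ^ i) x = (σ ^ j) x) :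
    (σ ^ (-i)) x = (σ ^ (-j)) x :=
  calc (σ ^ (-i)) x = (σ ^ (-i - j)) ((σ ^ j) x) := by rw [← mul_apply, ← zpow_add, sub_add_cancel]
    _ = (σ ^ (-i - j)) ((σ ^ i) x) := by rw [h]
    _ = (σ ^ (-j)) x := by rw [← mul_apply, ← zpow_add]; congr 2; ring

variable (a : α)

open Classical in
noncomputable def cycleBase (x : α) : α :=
  if σ.SameCycle a x then a else (Quotient.mk (SameCycle.setoid σ) x).out

theorem sameCycle_cycleBase (x : α) : σ.SameCycle (σ.cycleBase a x) x := by
  unfold cycleBase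
  split_ifs with h
  · exact h
  · exact Quotient.mk_out (s := SameCycle.setoid σ) x

theorem cycleBase_eq_of_sameCycle {x y : α} (h : σ.SameCycle x y) :
    σ.cycleBase a x = σ.cycleBase a y := by
  unfold cycleBase
  by_cases hx : σ.SameCycle a x
  · rw [if_pos hx, if_pos (hx.trans h)]
  · rw [if_neg hx, if_neg fun hy => hx (hy.trans h.symm), Quotient.sound h]

theorem cycleBase_self : σ.cycleBase a a = a := if_pos (SameCycle.refl σ a)

noncomputable def cycleIndex (x : α) : ℤ := (σ.sameCycle_cycleBase a x).choose

theorem zpow_cycleIndex_apply (x : α) : (σ ^ σ.cycleIndex a x) (σ.cycleBase a x) = x :=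
  (σ.sameCycle_cycleBase a x).choose_spec

/-- Reflects each cycle of `σ` about its base point `b`: `(σ ^ i) b ↦ (σ ^ (-i)) b`. -/
noncomputable def cycleReflection (x : α) : α :=
  (σ ^ (-σ.cycleIndex a x)) (σ.cycleBase a x)

theorem cycleReflection_zpow_apply (x : α) (i : ℤ) :
    σ.cycleReflection a ((σ ^ i) x) = (σ ^ (-i)) (σ.cycleReflection a x) := by
  have hb : σ.cycleBase a ((σ ^ i) x) = σ.cycleBase a x :=
    (σ.cycleBase_eq_of_sameCycle a ⟨i, rfl⟩).symm
  have key : (σ ^ σ.cycleIndex a ((σ ^ i) x)) (σ.cycleBase a x) =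
      (σ ^ (i + σ.cycleIndex a x)) (σ.cycleBase a x) := by
    rw [← hb, zpow_cycleIndex_apply, zpow_add, mul_apply, hb, zpow_cycleIndex_apply]
  rw [cycleReflection, cycleReflection, hb, zpow_neg_apply_eq_of_zpow_apply_eq σ key, neg_add,
    zpow_add, mul_apply]

theorem cycleReflection_cycleBase (x : α) :
    σ.cycleReflection a (σ.cycleBase a x) = σ.cycleBase a x := by
  set b := σ.cycleBase a x
  have hb : σ.cycleBase a b = b :=
    σ.cycleBase_eq_of_sameCycle a (σ.sameCycle_cycleBase a x)
  have key : (σ ^ σ.cycleIndex a b) b = (σ ^ (0 : ℤ)) b := by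
    have := σ.zpow_cycleIndex_apply a b
    rw [hb] at this
    rw [this, zpow_zero, one_apply]
  rw [cycleReflection, hb, zpow_neg_apply_eq_of_zpow_apply_eq σ key, neg_zero, zpow_zero,
    one_apply]

theorem cycleReflection_involutive : Function.Involutive (σ.cycleReflection a) := fun x => by
  have hx : σ.cycleReflection a x = (σ ^ (-σ.cycleIndex a x)) (σ.cycleBase a x) := rfl
  rw [hx, cycleReflection_zpow_apply, cycleReflection_cycleBase, neg_neg, zpow_cycleIndex_apply]

theorem exists_apply_eq_self_and_mul_mul_inv_eq_inv :
    ∃ θ : Perm α, θ a = a ∧ θ * σ * θ⁻¹ = σ⁻¹ := by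
  refine ⟨(σ.cycleReflection_involutive a).toPerm, ?_, ?_⟩
  · simpa [cycleBase_self] using σ.cycleReflection_cycleBase a a
  · rw [mul_inv_eq_iff_eq_mul, ← (σ.cycleReflection_involutive a).toPerm_symm]
    ext x
    simpa using σ.cycleReflection_zpow_apply a x 1

end Equiv.Perm

namespace MonoidAlgebra

open MulOpposite

variable {k G : Type*} [Group G]

section CommSemiring

variable [CommSemiring k]

noncomputable def invOp : k[G] →ₐ[k] k[G]ᵐᵒᵖ :=
  lift k k[G]ᵐᵒᵖ G ((of k G).op.comp (MulEquiv.inv' G).toMonoidHom)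

theorem coeff_unop_invOp (a : k[G]) (g : G) : (unop (invOp a)).coeff g = a.coeff g⁻¹ := by
  classical
  induction a using MonoidAlgebra.induction_linear with
  | zero => simp
  | add a b ha hb => simp [ha, hb]
  | single h r => simp [invOp, Finsupp.single_apply, inv_eq_iff_eq_inv]

variable {H : Subgroup G}

theorem coeff_conj_eq_of_mem_centralizer {a : k[G]}
    (ha : a ∈ (Set.range ((of k G).comp H.subtype)).centralizer) (h : H) (g : G) :
    a.coeff (h * g * (h : G)⁻¹) = a.coeff g := by
  simpa [of_apply] using congr(($(ha _ ⟨h, rfl⟩)).coeff ((h : G) * g)).symm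

theorem invOp_eq_op_of_mem_centralizer (hconj : ∀ g : G, ∃ h ∈ H, h * g * h⁻¹ = g⁻¹) {a : k[G]}
    (ha : a ∈ (Set.range ((of k G).comp H.subtype)).centralizer) : invOp a = op a := by
  refine unop_injective (MonoidAlgebra.ext (Finsupp.ext fun g => ?_))
  obtain ⟨h, hH, hg⟩ := hconj g
  rw [coeff_unop_invOp, ← hg, coeff_conj_eq_of_mem_centralizer ha ⟨h, hH⟩, unop_op]

theorem commute_of_mem_centralizer (hconj : ∀ g : G, ∃ h ∈ H, h * g * h⁻¹ = g⁻¹) {a b : k[G]}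
    (ha : a ∈ (Set.range ((of k G).comp H.subtype)).centralizer)
    (hb : b ∈ (Set.range ((of k G).comp H.subtype)).centralizer) : Commute a b := by
  apply op_injective
  rw [← invOp_eq_op_of_mem_centralizer hconj (Set.mul_mem_centralizer ha hb), map_mul,
    invOp_eq_op_of_mem_centralizer hconj ha, invOp_eq_op_of_mem_centralizer hconj hb, op_mul]

end CommSemiring

variable [Field k] (H : Subgroup G) [Fintype H]

noncomputable def conjAverage (a : k[G]) : k[G] :=
  (Fintype.card H : k)⁻¹ • ∑ h : H, of k G h * a * of k G (h : G)⁻¹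

theorem conjAverage_mem_centralizer (a : k[G]) :
    conjAverage H a ∈ (Set.range ((of k G).comp H.subtype)).centralizer := by
  rintro _ ⟨h', rfl⟩
  simp only [conjAverage, MonoidHom.comp_apply, Subgroup.coe_subtype, mul_smul_comm,
    smul_mul_assoc, Finset.mul_sum, Finset.sum_mul]
  congr 1
  refine Fintype.sum_equiv (Equiv.mulLeft h') _ _ fun h => ?_
  simp only [Equiv.coe_mulLeft, Subgroup.coe_mul, mul_inv_rev, map_mul, mul_assoc,
    ← map_mul (of k G) _ (h' : G), inv_mul_cancel, map_one, mul_one]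

end MonoidAlgebra

theorem RepIsIrreducible.isIrreducible {k G V : Type*} [Field k] [Group G]
    [AddCommGroup V] [Module k V] {ρ : Representation k G V} (hρ : RepIsIrreducible ρ) :
    ρ.IsIrreducible where
  exists_pair_ne := by
    obtain ⟨v, hv⟩ := hρ.1
    refine ⟨⊥, ⊤, fun h => hv ?_⟩
    have : v ∈ (⊤ : Subrepresentation ρ).toSubmodule := Submodule.mem_top
    rw [← h] at this
    exact (Submodule.mem_bot k).1 this
  eq_bot_or_eq_top p := by
    rcases hρ.2 p.toSubmodule fun g v hv => p.apply_mem_toSubmodule g hv with h | h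
    · exact Or.inl (Subrepresentation.toSubmodule_injective h)
    · exact Or.inr (Subrepresentation.toSubmodule_injective h)

namespace Representation

variable {k G V W : Type*} [Field k] [Group G] [AddCommGroup V] [Module k V]
  [AddCommGroup W] [Module k W]

theorem IsIrreducible.finiteDimensional [Finite G] (ρ : Representation k G V) [ρ.IsIrreducible] :
    FiniteDimensional k V := by
  have : Module.Finite k ρ.asModule := .trans k[G] _
  exact .equiv ρ.asModuleEquiv

theorem asAlgebraHom_surjective [IsAlgClosed k] [FiniteDimensional k V] (ρ : Representation k G V)
    [ρ.IsIrreducible] : Function.Surjective ρ.asAlgebraHom := by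
  intro T
  have hscalar := IsSimpleModule.algebraMap_end_bijective_of_isAlgClosed
    (A := k[G]) (V := ρ.asModule) k
  have : Module.Finite (Module.End k[G] ρ.asModule) ρ.asModule :=
    .of_restrictScalars_finite k _ _
  let T' : Module.End (Module.End k[G] ρ.asModule) ρ.asModule :=
    { toFun := T
      map_add' := T.map_add
      map_smul' := fun φ m => by
        obtain ⟨c, rfl⟩ := hscalar.2 φ
        exact T.map_smul c m }
  obtain ⟨r, hr⟩ := Module.Finite.toModuleEnd_moduleEnd_surjective T'
  exact ⟨r, LinearMap.ext fun v => congr($hr v)⟩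

theorem asAlgebraHom_conjAverage {H : Subgroup G} [Fintype H] [NeZero (Nat.card H : k)]
    (ρ : Representation k G V) {a : k[G]}
    (ha : ρ.asAlgebraHom a ∈ (Set.range (ρ.comp H.subtype)).centralizer) :
    ρ.asAlgebraHom (MonoidAlgebra.conjAverage H a) = ρ.asAlgebraHom a := by
  have hterm (h : H) : ρ h * ρ.asAlgebraHom a * ρ (h : G)⁻¹ = ρ.asAlgebraHom a := by
    rw [(ha _ ⟨h, rfl⟩ : ρ h * ρ.asAlgebraHom a = ρ.asAlgebraHom a * ρ h), mul_assoc, ← map_mul,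
      mul_inv_cancel, map_one, mul_one]
  have hcard : (Fintype.card H : k) ≠ 0 := by
    rw [← Nat.card_eq_fintype_card]; exact NeZero.ne _
  simp only [MonoidAlgebra.conjAverage, map_smul, map_sum, map_mul, asAlgebraHom_of, hterm,
    Finset.sum_const, Finset.card_univ, ← Nat.cast_smul_eq_nsmul k, smul_smul,
    inv_mul_cancel₀ hcard, one_smul]

theorem commute_intertwiningMap_of_forall_exists_conj_eq_inv [IsAlgClosed k]
    [FiniteDimensional k V] {H : Subgroup G} [Finite H] [NeZero (Nat.card H : k)]
    (ρ : Representation k G V) [ρ.IsIrreducible] (hconj : ∀ g : G, ∃ h ∈ H, h * g * h⁻¹ = g⁻¹)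
    (T S : IntertwiningMap (ρ.comp H.subtype) (ρ.comp H.subtype)) : Commute T S := by
  have := Fintype.ofFinite H
  have hcent (U : IntertwiningMap (ρ.comp H.subtype) (ρ.comp H.subtype)) :
      U.toLinearMap ∈ (Set.range (ρ.comp H.subtype)).centralizer := by
    rintro _ ⟨h, rfl⟩
    exact (U.isIntertwining' h).symm
  obtain ⟨a, ha⟩ := ρ.asAlgebraHom_surjective T.toLinearMap
  obtain ⟨b, hb⟩ := ρ.asAlgebraHom_surjective S.toLinearMap
  have hab := (MonoidAlgebra.commute_of_mem_centralizer hconj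
    (MonoidAlgebra.conjAverage_mem_centralizer H a)
    (MonoidAlgebra.conjAverage_mem_centralizer H b)).map ρ.asAlgebraHom
  rw [asAlgebraHom_conjAverage ρ (ha ▸ hcent T), asAlgebraHom_conjAverage ρ (hb ▸ hcent S),
    ha, hb] at hab
  exact IntertwiningMap.toLinearMap_injective _ _ hab

theorem IntertwiningMap.exists_comp_eq_id [Finite G] [NeZero (Nat.card G : k)]
    {ρ : Representation k G V} {σ : Representation k G W} (f : IntertwiningMap ρ σ)
    (hf : Function.Injective f) : ∃ p : IntertwiningMap σ ρ, p.comp f = .id ρ := by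
  obtain ⟨P, hP⟩ := MonoidAlgebra.exists_leftInverse_of_injective
    (equivLinearMapAsModule ρ σ f) (LinearMap.ker_eq_bot.2 hf)
  exact ⟨(equivLinearMapAsModule σ ρ).symm P,
    IntertwiningMap.ext (LinearMap.ext fun v => congr($hP v))⟩

theorem IntertwiningMap.exists_eq_smul_of_commute [IsAlgClosed k] [Finite G]
    [NeZero (Nat.card G : k)]
    {σ : Representation k G V} {τ : Representation k G W} [τ.IsIrreducible]
    (hσ : ∀ T S : IntertwiningMap σ σ, Commute T S) (f g : IntertwiningMap τ σ) (hf : f ≠ 0) :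
    ∃ c : k, g = c • f := by
  have := IsIrreducible.finiteDimensional τ
  obtain ⟨p, hp⟩ := f.exists_comp_eq_id ((IsIrreducible.injective_or_eq_zero f).resolve_right hf)
  obtain ⟨c, hc⟩ :=
    (IsIrreducible.algebraMap_intertwiningMap_bijective_of_isAlgClosed (ρ := τ)).2 (p.comp g)
  have hpf (w : W) : p (f w) = w := congr($hp w)
  have hg (w : W) : g w = f (p (g w)) := by
    simpa [hpf] using congr($((hσ (f.comp p) (g.comp p)).eq) (f w)).symm
  refine ⟨c, DFunLike.ext _ _ fun w => ?_⟩
  have hpg : p (g w) = c • w := by simpa using congr($hc w).symm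
  rw [hg w, hpg, map_smul]
  rfl

theorem rank_intertwiningMap_le_one [IsAlgClosed k] [Finite G] [NeZero (Nat.card G : k)]
    {σ : Representation k G V} {τ : Representation k G W} [τ.IsIrreducible]
    (hσ : ∀ T S : IntertwiningMap σ σ, Commute T S) :
    Module.rank k (IntertwiningMap τ σ) ≤ 1 := by
  rw [rank_le_one_iff]
  by_cases h : ∀ f : IntertwiningMap τ σ, f = 0
  · exact ⟨0, fun g => ⟨0, by rw [h g, smul_zero]⟩⟩
  · obtain ⟨f, hf⟩ := not_forall.1 h
    exact ⟨f, fun g => (IntertwiningMap.exists_eq_smul_of_commute hσ f g hf).imp fun _ => Eq.symm⟩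

end Representation

def equivariantHomsEquivIntertwiningMap {G : Type*} [Group G] (H : Subgroup G)
    {V : Type*} [AddCommGroup V] [Module ℂ V] (ρ : Representation ℂ G V)
    {W : Type*} [AddCommGroup W] [Module ℂ W] (τ : Representation ℂ H W) :
    equivariantHoms H ρ τ ≃ₗ[ℂ] Representation.IntertwiningMap τ (ρ.comp H.subtype) where
  toFun f := ⟨f, fun h => LinearMap.ext (f.2 h)⟩
  invFun F := ⟨F.toLinearMap, fun h w => congr($(F.isIntertwining' h) w)⟩
  map_add' _ _ := rfl
  map_smul' _ _ := rfl
  left_inv _ := rfl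
  right_inv _ := rfl

/-- Restriction from `S_n` to `S_{n-1}` is multiplicity-free:  for every irreducible
complex representation `(V, ρ)` of `S_n` (realized here as `Equiv.Perm (Fin (n+1))`) and
every irreducible representation `(W, τ)` of the subgroup `S_{n-1}` (the stabilizer of
the last point), the space of `S_{n-1}`-equivariant maps `W → V` has dimension at most
one; equivalently, every irreducible `ℂ[S_{n-1}]`-module occurs in the restriction of
`V` with multiplicity at most one. -/
theorem restriction_multiplicity_free (n : ℕ)
    (V : Type*) [AddCommGroup V] [Module ℂ V]
    (ρ : Representation ℂ (Equiv.Perm (Fin (n + 1))) V) (hρ : RepIsIrreducible ρ)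
    (W : Type*) [AddCommGroup W] [Module ℂ W]
    (τ : Representation ℂ (pointStabilizer n) W) (hτ : RepIsIrreducible τ) :
    Module.rank ℂ (equivariantHoms (pointStabilizer n) ρ τ) ≤ 1 := by
  have := hρ.isIrreducible
  have := hτ.isIrreducible
  have := Representation.IsIrreducible.finiteDimensional ρ
  have hconj (σ : Equiv.Perm (Fin (n + 1))) : ∃ θ ∈ pointStabilizer n, θ * σ * θ⁻¹ = σ⁻¹ := by
    obtain ⟨θ, hθ, hθσ⟩ := σ.exists_apply_eq_self_and_mul_mul_inv_eq_inv (Fin.last n)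
    exact ⟨θ, MulAction.mem_stabilizer_iff.2 hθ, hθσ⟩
  rw [(equivariantHomsEquivIntertwiningMap _ ρ τ).rank_eq]
  exact Representation.rank_intertwiningMap_le_one
    (ρ.commute_intertwiningMap_of_forall_exists_conj_eq_inv hconj)
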